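/- arXiv:1412.8518 — 11 statements merged into one kernel-verified Lean document; each statement's English description precedes it below -/
import Mathlib

section
/- Let h ≥ 1 and let P be the probability distribution on prices in [1,h] with cumulative distribution function P(z) = (1 + ln z)/(1 + ln h) for z ∈ [1,h] (which includes a point mass of 1/(1 + ln h) at 1). Then for every buyer value v ∈ [1,h], the expected revenue from posting a random price drawn from P (where a price p yields revenue p if p ≤ v, and 0 otherwise) equals v/(1 + ln h). -/
open MeasureTheory intervalIntegral

theorem integral_mul_one_div_mul (a b c : ℝ) :
    ∫ x in a..b, x * (1 / (x * c)) = (b - a) / c := by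
  have h_ae : ∀ᵐ x ∂volume, x ∈ Set.uIoc a b → x * (1 / (x * c)) = 1 / c := by
    filter_upwards [Measure.ae_ne volume 0] with x hx _
    rw [one_div, mul_inv, ← mul_assoc, mul_inv_cancel₀ hx, one_mul, one_div]
  rw [integral_congr_ae h_ae, intervalIntegral.integral_const, smul_eq_mul]
  ring

theorem monopoly_platform_revenue_general (h v : ℝ) :
    1 * (1 / (1 + Real.log h)) +
      ∫ p in (1:ℝ)..v, p * (1 / (p * (1 + Real.log h))) = v / (1 + Real.log h) := by
  rw [integral_mul_one_div_mul]
  ring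

/-- Monopoly pricing: expected revenue of the random price with CDF
`(1 + log z)/(1 + log h)` on `[1,h]` (point mass `1/(1+log h)` at `1`,
continuous density `1/(z (1 + log h))` on `[1,h]`) at a buyer value
`v ∈ [1,h]` equals `v/(1 + log h)`.  A price `p` yields revenue `p` iff
`p ≤ v`, so prices in `(v, h]` contribute nothing. -/
theorem monopoly_platform_revenue (h v : ℝ) (hh : 1 ≤ h) (hv : v ∈ Set.Icc 1 h) :
    1 * (1 / (1 + Real.log h)) +
      ∫ p in (1:ℝ)..v, p * (1 / (p * (1 + Real.log h))) = v / (1 + Real.log h) :=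
  monopoly_platform_revenue_general h v
end

section
/- Let h > 1. No randomized pricing mechanism (a probability distribution Q over prices) satisfies E_{p∼Q}[p·1[p ≤ v]] ≥ v/β for all v ∈ [1,h] with β < 1 + ln h. That is, the minimum β for which a random-price mechanism guarantees a 1/β fraction of v for every v ∈ [1,h] is 1 + ln h. -/
/-!
Take the geometric grid `vᵢ = rⁱ` (`i = 0, …, n`) with `rⁿ = h` and the weights
`uᵢ - uᵢ₊₁` (and `uₙ` on the top point), where `uᵢ = r⁻ⁱ`. Pointwise in the price `p`, each
weighted revenue `(uᵢ - uᵢ₊₁) p 1[p ≤ vᵢ]` is at most the drop from `i` to `i + 1` of the potential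
`min (max p 0 * uᵢ) 1`, so the weighted sum is at most `1`, hence so is its `Q`-expectation;
on the other hand the guarantee makes that expectation at least `(1 + n (1 - r⁻¹)) / β`.
Since `n (1 - h^(-1/n)) → log h`, letting `n → ∞` gives `1 + log h ≤ β`.
-/

open MeasureTheory Filter Topology Finset

noncomputable def revenue (v p : ℝ) : ℝ := (Set.Iic v).indicator (fun p => p) p

lemma revenue_of_le {v p : ℝ} (h : p ≤ v) : revenue v p = p :=
  Set.indicator_of_mem (Set.mem_Iic.mpr h) _

lemma revenue_of_lt {v p : ℝ} (h : v < p) : revenue v p = 0 :=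
  Set.indicator_of_notMem (Set.notMem_Iic.mpr h) _

lemma sub_mul_revenue_le {a b v : ℝ} (hba : b ≤ a) (hb : 0 ≤ b) (hav : a * v ≤ 1) (p : ℝ) :
    (a - b) * revenue v p ≤ min (max p 0 * a) 1 - min (max p 0 * b) 1 := by
  rcases le_or_gt p v with hpv | hvp
  · rw [revenue_of_le hpv]
    rcases le_or_gt p 0 with hp | hp
    · simp only [max_eq_right hp, zero_mul, sub_self]
      exact mul_nonpos_of_nonneg_of_nonpos (sub_nonneg.mpr hba) hp
    · have hpa : p * a ≤ 1 := by nlinarith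
      have hpb : p * b ≤ 1 := by nlinarith
      rw [max_eq_left hp.le, min_eq_left hpa, min_eq_left hpb]
      exact le_of_eq (by ring)
  · rw [revenue_of_lt hvp, mul_zero, sub_nonneg]
    gcongr

lemma sum_sub_mul_revenue_add_le_one {u v : ℕ → ℝ} (hu : Antitone u) (hu0 : ∀ i, 0 ≤ u i)
    (huv : ∀ i, u i * v i ≤ 1) (n : ℕ) (p : ℝ) :
    ∑ i ∈ range n, (u i - u (i + 1)) * revenue (v i) p + u n * revenue (v n) p ≤ 1 := by
  set g : ℕ → ℝ := fun i => min (max p 0 * u i) 1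
  have htop : u n * revenue (v n) p ≤ g n := by
    simpa [g] using sub_mul_revenue_le (hu0 n) le_rfl (huv n) p
  calc ∑ i ∈ range n, (u i - u (i + 1)) * revenue (v i) p + u n * revenue (v n) p
      ≤ ∑ i ∈ range n, (g i - g (i + 1)) + g n := by
        gcongr with i
        exact sub_mul_revenue_le (hu i.le_succ) (hu0 _) (huv i) p
    _ = g 0 := by rw [sum_range_sub', sub_add_cancel]
    _ ≤ 1 := min_le_right _ _

lemma sum_sub_mul_integral_revenue_add_le_one (Q : Measure ℝ) [IsProbabilityMeasure Q]
    {u v : ℕ → ℝ} (hu : Antitone u) (hu0 : ∀ i, 0 ≤ u i) (huv : ∀ i, u i * v i ≤ 1) (n : ℕ)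
    (hint : ∀ i ≤ n, Integrable (revenue (v i)) Q) :
    ∑ i ∈ range n, (u i - u (i + 1)) * ∫ p, revenue (v i) p ∂Q
      + u n * ∫ p, revenue (v n) p ∂Q ≤ 1 := by
  have hint_sum : Integrable
      (fun p => ∑ i ∈ range n, (u i - u (i + 1)) * revenue (v i) p) Q :=
    integrable_finsetSum _ fun i hi => (hint i (mem_range.mp hi).le).const_mul _
  have hint_top : Integrable (fun p => u n * revenue (v n) p) Q := (hint n le_rfl).const_mul _
  simp_rw [← integral_const_mul]
  rw [← integral_finsetSum _ fun i hi => (hint i (mem_range.mp hi).le).const_mul _,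
    ← integral_add hint_sum hint_top]
  simpa using integral_mono (hint_sum.add hint_top) (integrable_const 1)
    (sum_sub_mul_revenue_add_le_one hu hu0 huv n)

lemma one_add_mul_one_sub_inv_le (Q : Measure ℝ) [IsProbabilityMeasure Q] {β r : ℝ}
    (hβ : 0 < β) (hr : 1 ≤ r) (n : ℕ)
    (hguar : ∀ i ≤ n, r ^ i / β ≤ ∫ p, revenue (r ^ i) p ∂Q) :
    1 + n * (1 - r⁻¹) ≤ β := by
  have hr0 : 0 < r := one_pos.trans_le hr
  have hint : ∀ i ≤ n, Integrable (revenue (r ^ i)) Q := fun i hi =>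
    Integrable.of_integral_ne_zero ((div_pos (pow_pos hr0 i) hβ).trans_le (hguar i hi)).ne'
  have hu : Antitone fun i : ℕ => r⁻¹ ^ i := fun i j hij =>
    pow_le_pow_of_le_one (by positivity) (inv_le_one_of_one_le₀ hr) hij
  have huv : ∀ i : ℕ, r⁻¹ ^ i * r ^ i = 1 := fun i => by
    rw [inv_pow, inv_mul_cancel₀ (pow_pos hr0 i).ne']
  have hstep : ∀ i : ℕ, (r⁻¹ ^ i - r⁻¹ ^ (i + 1)) * r ^ i = 1 - r⁻¹ := fun i => by
    rw [sub_mul, huv, pow_succ, mul_right_comm, huv, one_mul]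
  have hbound := sum_sub_mul_integral_revenue_add_le_one Q hu (fun i => by positivity)
    (fun i => (huv i).le) n hint
  have hlower : (1 + n * (1 - r⁻¹)) / β ≤
      ∑ i ∈ range n, (r⁻¹ ^ i - r⁻¹ ^ (i + 1)) * ∫ p, revenue (r ^ i) p ∂Q
        + r⁻¹ ^ n * ∫ p, revenue (r ^ n) p ∂Q := by
    calc (1 + n * (1 - r⁻¹)) / β
        = ∑ i ∈ range n, (r⁻¹ ^ i - r⁻¹ ^ (i + 1)) * (r ^ i / β) + r⁻¹ ^ n * (r ^ n / β) := by
          simp only [← mul_div_assoc, ← sum_div, hstep, huv, sum_const, card_range,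
            nsmul_eq_mul]
          ring
      _ ≤ _ := by
          gcongr with i hi
          · exact sub_nonneg.mpr (hu i.le_succ)
          · exact hguar i (mem_range.mp hi).le
          · exact hguar n le_rfl
  rw [← div_le_one hβ]
  exact hlower.trans hbound

/-- Lower bound for monopoly-pricing platforms: no randomized price
distribution `Q` guarantees expected revenue `E_{p∼Q}[p·1[p ≤ v]] ≥ v/β` for
every value `v ∈ [1,h]` with `β < 1 + log h`. -/
theorem monopoly_platform_lower_bound (h : ℝ) (hh : 1 < h)
    (Q : Measure ℝ) [IsProbabilityMeasure Q] (β : ℝ) (hβ : 0 < β)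
    (hguar : ∀ v ∈ Set.Icc (1:ℝ) h,
      v / β ≤ ∫ p, (Set.Iic v).indicator (fun p => p) p ∂Q) :
    1 + Real.log h ≤ β := by
  set L := Real.log h
  have hbound : ∀ n : ℕ, 1 ≤ n → 1 + L / Real.exp (L / n) ≤ β := fun n hn => by
    set r := Real.exp (L / n)
    have hn0 : (n : ℝ) ≠ 0 := by positivity
    have hr : 1 ≤ r := Real.one_le_exp (div_nonneg (Real.log_nonneg hh.le) n.cast_nonneg)
    have hrn : r ^ n = h := by
      rw [← Real.exp_nat_mul, mul_div_cancel₀ _ hn0, Real.exp_log (one_pos.trans hh)]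
    have hgrid := one_add_mul_one_sub_inv_le Q hβ hr n fun i hi =>
      hguar _ ⟨one_le_pow₀ hr, hrn ▸ pow_le_pow_right₀ hr hi⟩
    have hlog : L / n ≤ r - 1 := by
      simpa [r] using Real.log_le_sub_one_of_pos (Real.exp_pos (L / n))
    have hr0 : 0 < r := Real.exp_pos _
    calc 1 + L / r = 1 + n * (L / n / r) := by field_simp
      _ ≤ 1 + n * ((r - 1) / r) := by gcongr
      _ = 1 + n * (1 - r⁻¹) := by field_simp
      _ ≤ β := hgrid
  have hlim : Tendsto (fun n : ℕ => 1 + L / Real.exp (L / n)) atTop (𝓝 (1 + L)) := by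
    simpa using tendsto_const_nhds.add <| tendsto_const_nhds.div
      (tendsto_const_div_atTop_nhds_zero_nat L).rexp (Real.exp_ne_zero 0)
  exact le_of_tendsto hlim (eventually_atTop.mpr ⟨1, hbound⟩)
end

section
/- In a Bayesian incentive compatible mechanism, the interim allocation rule x_i(v_i) is monotone nondecreasing in v_i, and the interim payment satisfies the payment identity p_i(v_i) = v_i·x_i(v_i) − ∫₀^{v_i} x_i(z) dz + p_i(0). -/
open MeasureTheory intervalIntegral Set Filter

/-!
Incentive compatibility, applied to the deviations `s → t` and `t → s`, traps the increment of
the interim utility `u v = v * x v - p v` between `(t - s) * x s` and `(t - s) * x t`. The first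
consequence is that `x` is monotone. Hence `F v = ∫₀^v x` is trapped between the same bounds, so
`|(u - F) t - (u - F) s| ≤ (t - s) * (x t - x s)`. Over a uniform partition of `[0, v]` into `n`
pieces these bounds sum to `v * (x v - x 0) / n`, which tends to `0`, so `u - F` is constant.
-/

section Telescoping

variable {g h : ℝ → ℝ} {a b : ℝ}

lemma abs_sub_le_div_mul_sub_of_abs_sub_le (hab : a ≤ b)
    (hgh : ∀ s t, a ≤ s → s ≤ t → t ≤ b → |g t - g s| ≤ (t - s) * (h t - h s))
    {n : ℕ} (hn : 0 < n) : |g b - g a| ≤ (b - a) / n * (h b - h a) := by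
  set δ := (b - a) / n
  set pt : ℕ → ℝ := fun k => a + k * δ
  have hδ : 0 ≤ δ := div_nonneg (sub_nonneg.2 hab) n.cast_nonneg
  have hpt_zero : pt 0 = a := by simp [pt]
  have hpt_n : pt n = b := by
    simp only [pt, δ]; field_simp [(Nat.cast_pos.2 hn).ne']; ring
  have hpt_succ (k : ℕ) : pt (k + 1) = pt k + δ := by simp only [pt]; push_cast; ring
  have hpt_le {k : ℕ} (hk : k ≤ n) : pt k ≤ b := by
    rw [← hpt_n]; simp only [pt]; gcongr
  calc |g b - g a| = |∑ k ∈ Finset.range n, (g (pt (k + 1)) - g (pt k))| := by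
        rw [Finset.sum_range_sub (fun k => g (pt k)), hpt_n, hpt_zero]
    _ ≤ ∑ k ∈ Finset.range n, |g (pt (k + 1)) - g (pt k)| := Finset.abs_sum_le_sum_abs _ _
    _ ≤ ∑ k ∈ Finset.range n, δ * (h (pt (k + 1)) - h (pt k)) := by
        refine Finset.sum_le_sum fun k hk => ?_
        have hk := Finset.mem_range.1 hk
        simpa [hpt_succ k] using hgh (pt k) (pt (k + 1))
          (le_add_of_nonneg_right (by positivity)) (by rw [hpt_succ]; linarith)
          (hpt_le hk)
    _ = δ * (h b - h a) := by
        rw [← Finset.mul_sum, Finset.sum_range_sub (fun k => h (pt k)), hpt_n, hpt_zero]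

lemma eq_of_abs_sub_le_mul_sub (hab : a ≤ b)
    (hgh : ∀ s t, a ≤ s → s ≤ t → t ≤ b → |g t - g s| ≤ (t - s) * (h t - h s)) :
    g b = g a := by
  have hlim : Tendsto (fun n : ℕ => (b - a) * (h b - h a) / n) atTop (nhds 0) :=
    tendsto_const_div_atTop_nhds_zero_nat _
  have hle : |g b - g a| ≤ 0 := by
    refine ge_of_tendsto hlim ?_
    filter_upwards [eventually_gt_atTop 0] with n hn
    rw [mul_div_right_comm]
    exact abs_sub_le_div_mul_sub_of_abs_sub_le hab hgh hn
  exact sub_eq_zero.1 (abs_nonpos_iff.1 hle)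

end Telescoping

section Monotone

variable {f : ℝ → ℝ} {s t : ℝ}

lemma MonotoneOn.mul_le_intervalIntegral (hf : MonotoneOn f (Icc s t)) (hst : s ≤ t) :
    (t - s) * f s ≤ ∫ z in s..t, f z := by
  simpa using integral_mono_on hst intervalIntegrable_const
    (uIcc_of_le hst ▸ hf).intervalIntegrable (μ := volume)
    fun z hz => hf (left_mem_Icc.2 hst) hz hz.1

lemma MonotoneOn.intervalIntegral_le_mul (hf : MonotoneOn f (Icc s t)) (hst : s ≤ t) :
    ∫ z in s..t, f z ≤ (t - s) * f t := by
  simpa using integral_mono_on hst (uIcc_of_le hst ▸ hf).intervalIntegrable (μ := volume)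
    intervalIntegrable_const fun z hz => hf hz (right_mem_Icc.2 hst) hz.2

end Monotone

def interimUtility (x p : ℝ → ℝ) (v : ℝ) : ℝ := v * x v - p v

def IncentiveCompatible (x p : ℝ → ℝ) : Prop :=
  ∀ v v' : ℝ, 0 ≤ v → 0 ≤ v' → v * x v' - p v' ≤ v * x v - p v

namespace IncentiveCompatible

variable {x p : ℝ → ℝ} {s t : ℝ}

lemma mul_le_interimUtility_sub (hIC : IncentiveCompatible x p) (hs : 0 ≤ s) (ht : 0 ≤ t) :
    (t - s) * x s ≤ interimUtility x p t - interimUtility x p s := by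
  unfold interimUtility
  linarith [hIC t s ht hs]

lemma interimUtility_sub_le_mul (hIC : IncentiveCompatible x p) (hs : 0 ≤ s) (ht : 0 ≤ t) :
    interimUtility x p t - interimUtility x p s ≤ (t - s) * x t := by
  unfold interimUtility
  linarith [hIC s t hs ht]

lemma monotoneOn (hIC : IncentiveCompatible x p) : MonotoneOn x (Ici 0) := by
  intro s hs t ht hst
  rcases hst.eq_or_lt with rfl | hlt
  · rfl
  · have := (hIC.mul_le_interimUtility_sub hs ht).trans (hIC.interimUtility_sub_le_mul hs ht)
    exact le_of_mul_le_mul_left this (sub_pos.2 hlt)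

lemma abs_interimUtility_sub_integral_sub_le (hIC : IncentiveCompatible x p) (hs : 0 ≤ s)
    (hst : s ≤ t) :
    |(interimUtility x p t - ∫ z in 0..t, x z) - (interimUtility x p s - ∫ z in 0..s, x z)| ≤
      (t - s) * (x t - x s) := by
  have hmono : MonotoneOn x (Icc s t) := hIC.monotoneOn.mono fun z hz => hs.trans hz.1
  have hint (w : ℝ) (hw : 0 ≤ w) : IntervalIntegrable x volume 0 w :=
    (hIC.monotoneOn.mono (uIcc_of_le hw ▸ Icc_subset_Ici_self)).intervalIntegrable
  have hF : (∫ z in 0..t, x z) - ∫ z in 0..s, x z = ∫ z in s..t, x z :=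
    integral_interval_sub_left (hint t (hs.trans hst)) (hint s hs)
  rw [abs_le]
  constructor <;> linarith [hIC.mul_le_interimUtility_sub hs (hs.trans hst),
    hIC.interimUtility_sub_le_mul hs (hs.trans hst), hmono.mul_le_intervalIntegral hst,
    hmono.intervalIntegral_le_mul hst]

end IncentiveCompatible

theorem myerson_ic_characterization_general
    (x p : ℝ → ℝ)
    (hIC : ∀ v v' : ℝ, 0 ≤ v → 0 ≤ v' →
      v * x v' - p v' ≤ v * x v - p v) :
    MonotoneOn x (Ici 0) ∧
      ∀ v : ℝ, 0 ≤ v → p v = v * x v - (∫ z in (0:ℝ)..v, x z) + p 0 := by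
  have hIC : IncentiveCompatible x p := hIC
  refine ⟨hIC.monotoneOn, fun v hv => ?_⟩
  have hconst := eq_of_abs_sub_le_mul_sub (g := fun w => interimUtility x p w - ∫ z in 0..w, x z)
    hv fun s t hs hst _ => hIC.abs_interimUtility_sub_integral_sub_le hs hst
  simp only [interimUtility, zero_mul, zero_sub, integral_same, sub_zero] at hconst
  linarith

/-- Myerson's characterization of (Bayesian) incentive compatibility for a
single-dimensional agent: if truthtelling maximizes interim utility
`v·x(v) - p(v)`, then the interim allocation rule `x` is monotone
nondecreasing on values `v ≥ 0` and the payment identity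
`p(v) = v·x(v) - ∫₀^v x(z) dz + p(0)` holds. -/
theorem myerson_ic_characterization
    (x p : ℝ → ℝ)
    (hx01 : ∀ v : ℝ, 0 ≤ v → x v ∈ Icc (0:ℝ) 1)
    (hIC : ∀ v v' : ℝ, 0 ≤ v → 0 ≤ v' →
      v * x v' - p v' ≤ v * x v - p v) :
    MonotoneOn x (Ici 0) ∧
      ∀ v : ℝ, 0 ≤ v → p v = v * x v - (∫ z in (0:ℝ)..v, x z) + p 0 :=
  myerson_ic_characterization_general x p hIC
end

section
/- Consider two agents with values v₁, v₂ ≥ 0 and one item. The mechanism that sets w₁ = 1, draws w₂ uniformly from {0, 1/2, 2, ∞}, and allocates to the agent maximizing w_i·v_i (with the weighted Vickrey payment, so the winner i pays the minimum value she could bid and still win, i.e., (w_j·v_j)/w_i for the loser j) has expected residual surplus exactly (3/4)·max{(v₁+v₂)/2, v₁ − v₂/2, v₂ − v₁/2} for every valuation profile (v₁, v₂). -/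
lemma max_simp (v₁ v₂ : ℝ) (h1 : 0 ≤ v₁) (h2 : 0 ≤ v₂) :
    max ((v₁ + v₂) / 2) (max (v₁ - v₂ / 2) (v₂ - v₁ / 2)) =
      (if 2 * v₂ < v₁ then v₁ - v₂/2 else if 2 * v₁ < v₂ then v₂ - v₁/2 else (v₁+v₂)/2) := by
  split_ifs with h h'
  · rw [max_eq_left (show v₂ - v₁ / 2 ≤ v₁ - v₂ / 2 by linarith),
        max_eq_right (show (v₁ + v₂) / 2 ≤ v₁ - v₂ / 2 by linarith)]
  · rw [max_eq_right (show v₁ - v₂ / 2 ≤ v₂ - v₁ / 2 by linarith),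
        max_eq_right (show (v₁ + v₂) / 2 ≤ v₂ - v₁ / 2 by linarith)]
  · push_neg at h h'
    exact max_eq_left (max_le (by linarith) (by linarith))

/-- The optimal two-agent single-item platform for residual surplus: set
`w₁ = 1`, draw `w₂` uniformly from `{0, 1/2, 2, ∞}`, run the weighted Vickrey
auction (agent maximizing `wᵢ vᵢ` wins and pays `w_j v_j / w_i`).  The four
outcomes have residual surpluses `v₁` (for `w₂ = 0`), `v₂` (for `w₂ = ∞`),
`v₁ - v₂/2` or `v₂ - 2 v₁` (for `w₂ = 1/2`), and `v₁ - 2 v₂` or `v₂ - v₁/2`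
(for `w₂ = 2`).  The expected residual surplus is exactly
`(3/4)·max{(v₁+v₂)/2, v₁ - v₂/2, v₂ - v₁/2}` on every profile. -/
theorem ratio_auction_three_quarters (v₁ v₂ : ℝ) (h1 : 0 ≤ v₁) (h2 : 0 ≤ v₂) :
    (1 / 4) * (v₁ + v₂
        + (if v₂ / 2 ≤ v₁ then v₁ - v₂ / 2 else v₂ - 2 * v₁)
        + (if 2 * v₂ < v₁ then v₁ - 2 * v₂ else v₂ - v₁ / 2)) =
      (3 / 4) * max ((v₁ + v₂) / 2) (max (v₁ - v₂ / 2) (v₂ - v₁ / 2)) := by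
  rw [max_simp v₁ v₂ h1 h2]
  split_ifs <;> linarith
end

section
/- For i.i.d. standard exponential values v₁, v₂ with v = min(v₁,v₂) and x = max(v₁,v₂) − v, the conditional expectation of the benchmark satisfies E[B | v] = ∫₀^v (v + x/2)e^{−x}dx + ∫_v^∞ (v/2 + x)e^{−x}dx = v + (1 + e^{−v})/2. -/
open MeasureTheory intervalIntegral Set
open Real Filter Asymptotics Topology

/-! Both integrands have the form `(a + b x) e^{-x}`, whose antiderivative `-(a + b + b x) e^{-x}`
tends to `0` at infinity, so each piece is a boundary term of the fundamental theorem of calculus. -/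

theorem hasDerivAt_affine_mul_exp_neg (a b x : ℝ) :
    HasDerivAt (fun x => -(a + b + b * x) * exp (-x)) ((a + b * x) * exp (-x)) x := by
  have := (((hasDerivAt_id' x).const_mul b).const_add (a + b)).fun_neg.fun_mul (hasDerivAt_neg x).exp
  exact this.congr_deriv (by ring)

theorem tendsto_affine_mul_exp_neg_atTop (a b : ℝ) :
    Tendsto (fun x => (a + b * x) * exp (-x)) atTop (𝓝 0) := by
  have hconst := tendsto_exp_neg_atTop_nhds_zero.const_mul a
  have hlin := (tendsto_pow_mul_exp_neg_atTop_nhds_zero 1).const_mul b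
  simpa [add_mul, mul_assoc] using hconst.add hlin

theorem integrableOn_Ioi_affine_mul_exp_neg (a b c : ℝ) :
    IntegrableOn (fun x => (a + b * x) * exp (-x)) (Ioi c) := by
  have haffine : (fun x : ℝ => a + b * x) =o[atTop] fun x => exp (1 / 2 * x) := by
    simpa using ((isLittleO_pow_exp_pos_mul_atTop 0 one_half_pos).const_mul_left a).add
      ((isLittleO_pow_exp_pos_mul_atTop 1 one_half_pos).const_mul_left b)
  refine integrable_of_isBigO_exp_neg one_half_pos (by fun_prop) ?_
  refine (haffine.isBigO.mul (isBigO_refl (fun x => exp (-x)) atTop)).congr_right fun x => ?_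
  rw [← exp_add]
  ring_nf

theorem integral_affine_mul_exp_neg (a b c d : ℝ) :
    ∫ x in c..d, (a + b * x) * exp (-x) =
      (a + b + b * c) * exp (-c) - (a + b + b * d) * exp (-d) := by
  rw [integral_eq_sub_of_hasDerivAt (fun x _ => hasDerivAt_affine_mul_exp_neg a b x)
    (by apply Continuous.intervalIntegrable; fun_prop)]
  ring

theorem integral_Ioi_affine_mul_exp_neg (a b c : ℝ) :
    ∫ x in Ioi c, (a + b * x) * exp (-x) = (a + b + b * c) * exp (-c) := by
  rw [integral_Ioi_of_hasDerivAt_of_tendsto' (m := 0)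
    (fun x _ => hasDerivAt_affine_mul_exp_neg a b x) (integrableOn_Ioi_affine_mul_exp_neg a b c)]
  · ring
  · simpa only [neg_mul, neg_zero] using (tendsto_affine_mul_exp_neg_atTop (a + b) b).neg

theorem conditional_expected_benchmark_general (v : ℝ) :
    (∫ x in (0:ℝ)..v, (v + x / 2) * Real.exp (-x)) +
        (∫ x in Ioi v, (v / 2 + x) * Real.exp (-x)) =
      v + (1 + Real.exp (-v)) / 2 := by
  have hlow := integral_affine_mul_exp_neg v (1 / 2) 0 v
  have hhigh := integral_Ioi_affine_mul_exp_neg (v / 2) 1 v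
  simp only [one_mul, neg_zero, exp_zero, mul_zero, add_zero] at hlow hhigh
  rw [show (fun x => (v + x / 2) * exp (-x)) = fun x => (v + 1 / 2 * x) * exp (-x) by
    ext; ring, hlow, hhigh]
  ring

/-- Conditional expectation of the benchmark given the minimum value `v`, for
i.i.d. standard exponential values: with `x = max - min` standard exponential,
`E[B | v] = ∫₀^v (v + x/2) e^{-x} dx + ∫_v^∞ (v/2 + x) e^{-x} dx
          = v + (1 + e^{-v})/2`. -/
theorem conditional_expected_benchmark (v : ℝ) (hv : 0 ≤ v) :
    (∫ x in (0:ℝ)..v, (v + x / 2) * Real.exp (-x)) +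
        (∫ x in Ioi v, (v / 2 + x) * Real.exp (-x)) =
      v + (1 + Real.exp (-v)) / 2 :=
  conditional_expected_benchmark_general v
end

section
/- For every valuation profile v, supply k, and prices p ≥ q ≥ 0, the residual surplus of the two-level (p,q)-lottery is at most the sum of the residual surpluses of the one-level p-lottery and the one-level q-lottery: L_{p,q}(v) ≤ L_p(v) + L_q(v). Consequently there exists r ∈ {p,q} with L_r(v) ≥ L_{p,q}(v)/2. -/
open Finset

/-- Expected residual surplus of the one-level `r`-lottery with `k` units:
agents with value `> r` win (uniformly at random if there are more than `k` of
them) and pay `r`. -/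
noncomputable def oneLevelLottery (n k : ℕ) (r : ℝ) (v : Fin n → ℝ) : ℝ :=
  let W := Finset.univ.filter (fun i => r < v i)
  min 1 ((k : ℝ) / W.card) * ∑ i ∈ W, (v i - r)

/-- Expected residual surplus of the two-level `(p,q)`-lottery with `k` units:
with `S = {i : v i > p}`, `T = {i : q < v i ≤ p}`, `s = |S|`, `t = |T|`; if
`s > k` it is a `k`-unit `p`-lottery; if `s + t ≤ k` all of `S ∪ T` win at
price `q`; otherwise agents in `S` win paying `p - (p-q)(k-s+1)/(t+1)` and the
remaining `k - s` units go uniformly at random to `T` at price `q`. -/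
noncomputable def twoLevelLottery (n k : ℕ) (p q : ℝ) (v : Fin n → ℝ) : ℝ :=
  let S := Finset.univ.filter (fun i => p < v i)
  let T := Finset.univ.filter (fun i => q < v i ∧ v i ≤ p)
  let s := S.card
  let t := T.card
  if k < s then oneLevelLottery n k p v
  else if s + t ≤ k then ∑ i ∈ S ∪ T, (v i - q)
  else (∑ i ∈ S, (v i - (p - (p - q) * ((k : ℝ) - s + 1) / (t + 1))))
        + ((k : ℝ) - s) / t * ∑ i ∈ T, (v i - q)

/-! The two-level lottery is, case by case, dominated by the one-level ones. If `k < s` it *is*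
the `p`-lottery, and if `s + t ≤ k` it is the `q`-lottery. Otherwise everyone in `S` wins, so the
`p`-lottery collects `∑_S (v i - p)`, while the `q`-lottery gives every agent of `S ∪ T` a unit
with probability `k / (s + t)`. That probability is at least the `(k - s) / t` of an agent of `T`,
and since `v i - q ≥ p - q` on `S` it also pays for the discount `(p - q)(k - s + 1) / (t + 1)`. -/

lemma sub_div_le_div_add {k s t : ℕ} (hk : k ≤ s + t) :
    ((k : ℝ) - s) / t ≤ k / (s + t) := by
  rcases t.eq_zero_or_pos with rfl | ht
  · rw [Nat.cast_zero, div_zero, add_zero]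
    positivity
  have ht : (0 : ℝ) < t := by exact_mod_cast ht
  have hk : (k : ℝ) ≤ s + t := by exact_mod_cast hk
  rw [div_le_div_iff₀ ht (by positivity)]
  nlinarith [mul_nonneg (Nat.cast_nonneg (α := ℝ) s) (sub_nonneg.2 hk)]

lemma mul_sub_add_one_div_le {k s t : ℕ} (hk : k ≤ s + t) :
    (s : ℝ) * (((k : ℝ) - s + 1) / (t + 1)) ≤ s * (k / (s + t)) := by
  rcases s.eq_zero_or_pos with rfl | hs
  · simp
  have hs : (1 : ℝ) ≤ s := by exact_mod_cast hs
  have hk : (k : ℝ) ≤ s + t := by exact_mod_cast hk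
  refine mul_le_mul_of_nonneg_left ?_ (by positivity)
  rw [div_le_div_iff₀ (by positivity) (by positivity)]
  nlinarith [mul_nonneg (sub_nonneg.2 hs) (sub_nonneg.2 hk)]

lemma discounted_le_sum_add_div_mul {ι : Type*} (S T : Finset ι) (f : ι → ℝ) {k : ℕ} {p q : ℝ}
    (hpq : q ≤ p) (hS : ∀ i ∈ S, p < f i) (hT : ∀ i ∈ T, q < f i) (hk : k ≤ #S + #T) :
    ∑ i ∈ S, (f i - (p - (p - q) * ((k : ℝ) - #S + 1) / (#T + 1)))
        + ((k : ℝ) - #S) / #T * ∑ i ∈ T, (f i - q)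
      ≤ ∑ i ∈ S, (f i - p)
        + k / (#S + #T) * (∑ i ∈ S, (f i - q) + ∑ i ∈ T, (f i - q)) := by
  have hSq : #S • (p - q) ≤ ∑ i ∈ S, (f i - q) :=
    card_nsmul_le_sum _ _ _ fun i hi => by linarith [hS i hi]
  rw [nsmul_eq_mul] at hSq
  have hTq : 0 ≤ ∑ i ∈ T, (f i - q) := sum_nonneg fun i hi => by linarith [hT i hi]
  have hdiscount : (#S : ℝ) * ((p - q) * ((k : ℝ) - #S + 1) / (#T + 1))
      ≤ k / (#S + #T) * ∑ i ∈ S, (f i - q) :=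
    calc (#S : ℝ) * ((p - q) * ((k : ℝ) - #S + 1) / (#T + 1))
        = (p - q) * (#S * (((k : ℝ) - #S + 1) / (#T + 1))) := by ring
      _ ≤ (p - q) * (#S * (k / (#S + #T))) :=
        mul_le_mul_of_nonneg_left (mul_sub_add_one_div_le hk) (sub_nonneg.2 hpq)
      _ = k / (#S + #T) * (#S * (p - q)) := by ring
      _ ≤ k / (#S + #T) * ∑ i ∈ S, (f i - q) :=
        mul_le_mul_of_nonneg_left hSq (by positivity)
  have hshareT : ((k : ℝ) - #S) / #T * ∑ i ∈ T, (f i - q) ≤ k / (#S + #T) * ∑ i ∈ T, (f i - q) :=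
    mul_le_mul_of_nonneg_right (sub_div_le_div_add hk) hTq
  have hsplit : ∑ i ∈ S, (f i - (p - (p - q) * ((k : ℝ) - #S + 1) / (#T + 1)))
      = ∑ i ∈ S, (f i - p) + #S * ((p - q) * ((k : ℝ) - #S + 1) / (#T + 1)) := by
    simp only [sum_sub_distrib, sum_const, nsmul_eq_mul]
    ring
  rw [hsplit, mul_add ((k : ℝ) / (#S + #T))]
  linarith

section OneLevel

variable {n : ℕ} (k : ℕ) (r : ℝ) (v : Fin n → ℝ)

lemma oneLevelLottery_nonneg : 0 ≤ oneLevelLottery n k r v :=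
  mul_nonneg (le_min zero_le_one (by positivity))
    (sum_nonneg fun i hi => by linarith [(mem_filter.1 hi).2])

lemma oneLevelLottery_of_card_le (h : #(univ.filter fun i => r < v i) ≤ k) :
    oneLevelLottery n k r v = ∑ i ∈ univ.filter (fun i => r < v i), (v i - r) := by
  rcases (#(univ.filter fun i => r < v i)).eq_zero_or_pos with h0 | h0
  · simp [oneLevelLottery, card_eq_zero.1 h0]
  have hmin : min 1 ((k : ℝ) / #(univ.filter fun i => r < v i)) = 1 :=
    min_eq_left ((one_le_div (by exact_mod_cast h0)).2 (by exact_mod_cast h))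
  simp only [oneLevelLottery, hmin, one_mul]

lemma oneLevelLottery_of_lt_card (h : k < #(univ.filter fun i => r < v i)) :
    oneLevelLottery n k r v
      = k / #(univ.filter fun i => r < v i) * ∑ i ∈ univ.filter (fun i => r < v i), (v i - r) := by
  have hmin : min 1 ((k : ℝ) / #(univ.filter fun i => r < v i)) = k / #(univ.filter fun i => r < v i) :=
    min_eq_right ((div_le_one (by exact_mod_cast k.zero_le.trans_lt h)).2 (by exact_mod_cast h.le))
  simp only [oneLevelLottery, hmin]

end OneLevel

lemma filter_lt_eq_union {n : ℕ} (v : Fin n → ℝ) {p q : ℝ} (hpq : q ≤ p) :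
    univ.filter (fun i => q < v i)
      = univ.filter (fun i => p < v i) ∪ univ.filter (fun i => q < v i ∧ v i ≤ p) := by
  ext i
  simp only [mem_filter, mem_union, mem_univ, true_and]
  constructor
  · intro h
    exact (le_or_gt (v i) p).elim (fun h' => Or.inr ⟨h, h'⟩) Or.inl
  · rintro (h | ⟨h, _⟩) <;> linarith

lemma disjoint_filter_lt_filter_le {n : ℕ} (v : Fin n → ℝ) (p q : ℝ) :
    Disjoint (univ.filter fun i => p < v i) (univ.filter fun i => q < v i ∧ v i ≤ p) :=
  disjoint_filter.2 fun _ _ h h' => h'.2.not_gt h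

theorem twoLevelLottery_le_add {n : ℕ} (k : ℕ) {p q : ℝ} (v : Fin n → ℝ) (hpq : q ≤ p) :
    twoLevelLottery n k p q v ≤ oneLevelLottery n k p v + oneLevelLottery n k q v := by
  have hunion := filter_lt_eq_union v hpq
  have hdisj := disjoint_filter_lt_filter_le v p q
  have hcard : #(univ.filter fun i => q < v i)
      = #(univ.filter fun i => p < v i) + #(univ.filter fun i => q < v i ∧ v i ≤ p) := by
    rw [hunion, card_union_of_disjoint hdisj]
  simp only [twoLevelLottery]
  split_ifs with hpk hqk
  · linarith [oneLevelLottery_nonneg k q v]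
  · rw [← hunion, ← oneLevelLottery_of_card_le k q v (by omega)]
    linarith [oneLevelLottery_nonneg k p v]
  · rw [oneLevelLottery_of_card_le k p v (by omega),
      oneLevelLottery_of_lt_card k q v (by omega), hcard, hunion, sum_union hdisj, Nat.cast_add]
    exact discounted_le_sum_add_div_mul _ _ v hpq (fun i hi => (mem_filter.1 hi).2)
      (fun i hi => (mem_filter.1 hi).2.1) (by omega)

theorem two_level_le_sum_one_level_general (n k : ℕ) (p q : ℝ) (v : Fin n → ℝ)
    (hpq : q ≤ p) :
    twoLevelLottery n k p q v ≤ oneLevelLottery n k p v + oneLevelLottery n k q v ∧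
      ∃ r ∈ ({p, q} : Set ℝ), twoLevelLottery n k p q v / 2 ≤ oneLevelLottery n k r v := by
  have key := twoLevelLottery_le_add k v hpq
  refine ⟨key, ?_⟩
  rcases le_total (oneLevelLottery n k p v) (oneLevelLottery n k q v) with h | h
  · exact ⟨q, Or.inr rfl, by linarith⟩
  · exact ⟨p, Or.inl rfl, by linarith⟩

/-- One-level lotteries 2-approximate two-level lotteries: for every profile,
supply, and prices `p ≥ q ≥ 0`, `L_{p,q}(v) ≤ L_p(v) + L_q(v)`, and hence some
`r ∈ {p,q}` has `L_r(v) ≥ L_{p,q}(v)/2`. -/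
theorem two_level_le_sum_one_level (n k : ℕ) (p q : ℝ) (v : Fin n → ℝ)
    (hpq : q ≤ p) (hq : 0 ≤ q) :
    twoLevelLottery n k p q v ≤ oneLevelLottery n k p v + oneLevelLottery n k q v ∧
      ∃ r ∈ ({p, q} : Set ℝ), twoLevelLottery n k p q v / 2 ≤ oneLevelLottery n k r v :=
  two_level_le_sum_one_level_general n k p q v hpq
end

section
/- When each of n agents (with distinct values, agent i being the i-th highest valued) is independently assigned to M or S with probability 1/2 each, the probability that the partition is balanced — i.e., agent 1 ∈ M, agent 2 ∈ S, and for every i ≥ 3 the number of the top i agents in S lies in [i/4, 3i/4] and similarly for M — is at least 0.169. -/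
/-!
Agent `0` must go to the market and agent `1` to the sample (probability `1/4`); the other
`m = n - 2` agents form a uniform subset `B ⊆ range m`. The sample condition at the top `k + 2`
agents says that the walk `Z_k = 4 #(B ∩ range k) - k`, with steps `+3` and `-1`, stays above
`-3`, and the market condition says the same of the walk of `range m \ B`. For `c = 0.545`,
`c⁻¹ + c³ ≤ 2`, so `c ^ Z` stopped at `-3` is a supermartingale and the walk reaches `-3` with
probability at most `c³ < 0.1619`. The union bound gives `(1 - 2 c³) / 4 ≥ 0.169`.
-/

/-- A subset `A ⊆ {0,…,n-1}` (the sample `S`; agents are indexed in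
decreasing order of value, so agent `0` is the highest-valued) is *balanced*
if agent `0 ∉ A` (agent 1 is in the market `M`), agent `1 ∈ A` (agent 2 is in
the sample `S`), and for every `3 ≤ i ≤ n` the number of the top `i` agents in
`S` lies in `[i/4, 3i/4]`, and similarly for `M`. -/
def BalancedPartition (n : ℕ) (A : Finset ℕ) : Prop :=
  0 ∉ A ∧ 1 ∈ A ∧
    ∀ i : ℕ, 3 ≤ i → i ≤ n →
      ((i : ℝ) / 4 ≤ ((A ∩ Finset.range i).card : ℝ) ∧
        ((A ∩ Finset.range i).card : ℝ) ≤ 3 * (i : ℝ) / 4) ∧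
      ((i : ℝ) / 4 ≤ (((Finset.range i \ A).card : ℝ)) ∧
        (((Finset.range i \ A).card : ℝ)) ≤ 3 * (i : ℝ) / 4)

open Finset

def sampleWalk (B : Finset ℕ) (k : ℕ) : ℤ := 4 * #(B ∩ range k) - k

def WalkHits (a : ℕ) (B : Finset ℕ) (m : ℕ) : Prop := ∃ k ≤ m, sampleWalk B k ≤ -a

instance (a : ℕ) (B : Finset ℕ) (m : ℕ) : Decidable (WalkHits a B m) :=
  inferInstanceAs (Decidable (∃ k ≤ m, _))

noncomputable def stoppedWeight (c : ℝ) (a : ℕ) (B : Finset ℕ) (m : ℕ) : ℝ :=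
  if WalkHits a B m then c ^ (-(a : ℤ)) else c ^ sampleWalk B m

lemma sampleWalk_zero (B : Finset ℕ) : sampleWalk B 0 = 0 := by
  simp [sampleWalk]

lemma sampleWalk_succ (B : Finset ℕ) (k : ℕ) :
    sampleWalk B (k + 1) = sampleWalk B k + if k ∈ B then 3 else -1 := by
  unfold sampleWalk
  rw [range_add_one]
  split_ifs with h
  · rw [inter_insert_of_mem h, card_insert_of_notMem (by simp)]
    push_cast; ring
  · rw [inter_insert_of_notMem h]
    push_cast; ring

lemma sampleWalk_insert_of_le {B : Finset ℕ} {k m : ℕ} (hk : k ≤ m) :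
    sampleWalk (insert m B) k = sampleWalk B k := by
  have : insert m B ∩ range k = B ∩ range k := by
    rw [insert_inter_of_notMem (by simpa using hk)]
  simp only [sampleWalk, this]

lemma walkHits_succ {a : ℕ} {B : Finset ℕ} {m : ℕ} :
    WalkHits a B (m + 1) ↔ WalkHits a B m ∨ sampleWalk B (m + 1) ≤ -a := by
  simp only [WalkHits, Nat.le_succ_iff, or_and_right, exists_or, exists_eq_left]

lemma walkHits_insert_iff {a : ℕ} {B : Finset ℕ} {k m : ℕ} (hk : k ≤ m) :
    WalkHits a (insert m B) k ↔ WalkHits a B k := by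
  unfold WalkHits
  exact exists_congr fun j => and_congr_right fun hj => by
    rw [sampleWalk_insert_of_le (hj.trans hk)]

lemma stoppedWeight_step {c : ℝ} (hc : 0 < c) (hstep : c⁻¹ + c ^ 3 ≤ 2) (a : ℕ)
    {B : Finset ℕ} {m : ℕ} (hm : m ∉ B) :
    stoppedWeight c a B (m + 1) + stoppedWeight c a (insert m B) (m + 1)
      ≤ 2 * stoppedWeight c a B m := by
  have hwalk_ins : sampleWalk (insert m B) (m + 1) = sampleWalk B m + 3 := by
    rw [sampleWalk_succ, if_pos (mem_insert_self m B), sampleWalk_insert_of_le le_rfl]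
  have hwalk : sampleWalk B (m + 1) = sampleWalk B m - 1 := by
    rw [sampleWalk_succ, if_neg hm]; ring
  unfold stoppedWeight
  simp only [walkHits_succ, walkHits_insert_iff (le_refl m), hwalk, hwalk_ins]
  by_cases hit : WalkHits a B m
  · simp only [hit, true_or, if_true]; linarith
  set w := sampleWalk B m
  have hw : -(a : ℤ) < w := by
    by_contra! h; exact hit ⟨m, le_rfl, h⟩
  have hup : ¬ w + 3 ≤ -a := by omega
  -- Downward steps are `-1`, so the walk first reaches `-a` exactly.
  have hdown : (if w - 1 ≤ -a then c ^ (-(a : ℤ)) else c ^ (w - 1)) = c ^ (w - 1) := by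
    split_ifs with h
    · rw [show w - 1 = -a by omega]
    · rfl
  simp only [hit, hup, false_or, if_false, hdown]
  calc c ^ (w - 1) + c ^ (w + 3) = c ^ w * (c⁻¹ + c ^ 3) := by
        rw [zpow_sub₀ hc.ne', zpow_add₀ hc.ne', zpow_one, zpow_ofNat]; ring
    _ ≤ c ^ w * 2 := by gcongr
    _ = 2 * c ^ w := mul_comm _ _

lemma sum_stoppedWeight_le {c : ℝ} (hc : 0 < c) (hstep : c⁻¹ + c ^ 3 ≤ 2) (a m : ℕ) :
    ∑ B ∈ (range m).powerset, stoppedWeight c a B m ≤ 2 ^ m := by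
  induction m with
  | zero =>
    simp only [range_zero, powerset_empty, sum_singleton, pow_zero, stoppedWeight,
      sampleWalk_zero, zpow_zero]
    split_ifs with h
    · obtain ⟨k, hk, hwalk⟩ := h
      obtain rfl : a = 0 := by simp_all [sampleWalk_zero]
      simp
    · simp
  | succ m ih =>
    rw [range_add_one, sum_powerset_insert notMem_range_self, ← sum_add_distrib]
    calc ∑ B ∈ (range m).powerset,
          (stoppedWeight c a B (m + 1) + stoppedWeight c a (insert m B) (m + 1))
        ≤ ∑ B ∈ (range m).powerset, 2 * stoppedWeight c a B m :=
          sum_le_sum fun B hB => stoppedWeight_step hc hstep a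
            fun hm => notMem_range_self (mem_powerset.1 hB hm)
      _ ≤ 2 ^ (m + 1) := by rw [← mul_sum, pow_succ]; linarith

theorem card_walkHits_le {c : ℝ} (hc : 0 < c) (hstep : c⁻¹ + c ^ 3 ≤ 2) (a m : ℕ) :
    (#{B ∈ (range m).powerset | WalkHits a B m} : ℝ) ≤ c ^ a * 2 ^ m := by
  have hsum : (#{B ∈ (range m).powerset | WalkHits a B m} : ℝ) * c ^ (-(a : ℤ))
      ≤ 2 ^ m :=
    calc (#{B ∈ (range m).powerset | WalkHits a B m} : ℝ) * c ^ (-(a : ℤ))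
        = ∑ B ∈ (range m).powerset with WalkHits a B m, stoppedWeight c a B m := by
          rw [sum_congr rfl fun B hB => show stoppedWeight c a B m = c ^ (-(a : ℤ)) from
            if_pos (mem_filter.1 hB).2, sum_const, nsmul_eq_mul]
      _ ≤ ∑ B ∈ (range m).powerset, stoppedWeight c a B m :=
          sum_le_sum_of_subset_of_nonneg (filter_subset _ _) fun B _ _ => by
            unfold stoppedWeight; split_ifs <;> positivity
      _ ≤ 2 ^ m := sum_stoppedWeight_le hc hstep a m
  rw [zpow_neg, zpow_natCast, ← div_eq_mul_inv, div_le_iff₀ (by positivity)] at hsum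
  linarith

lemma card_filter_powerset_sdiff {α : Type*} [DecidableEq α] (s : Finset α)
    (p : Finset α → Prop) [DecidablePred p] :
    #{B ∈ s.powerset | p (s \ B)} = #{B ∈ s.powerset | p B} := by
  refine card_nbij' (s \ ·) (s \ ·) ?_ ?_ ?_ ?_ <;> intro B hB <;>
    simp only [coe_filter, mem_powerset, Set.mem_ofPred_eq] at hB ⊢
  · exact ⟨sdiff_subset, hB.2⟩
  · exact ⟨sdiff_subset, (Finset.sdiff_sdiff_eq_self hB.1).symm ▸ hB.2⟩
  · exact Finset.sdiff_sdiff_eq_self hB.1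
  · exact Finset.sdiff_sdiff_eq_self hB.1

lemma card_sdiff_range_inter_range_add {B : Finset ℕ} {k m : ℕ} (hk : k ≤ m) :
    #((range m \ B) ∩ range k) + #(B ∩ range k) = k := by
  have : (range m \ B) ∩ range k = range k \ B := by
    ext x
    simp only [mem_inter, mem_sdiff, mem_range]
    exact ⟨fun ⟨⟨_, hxB⟩, hxk⟩ => ⟨hxk, hxB⟩,
      fun ⟨hxk, hxB⟩ => ⟨⟨by omega, hxB⟩, hxk⟩⟩
  rw [this, inter_comm, card_sdiff_add_card_inter, card_range]

lemma balancedPartition_of_le_four_mul {n : ℕ} {A : Finset ℕ} (h0 : 0 ∉ A) (h1 : 1 ∈ A)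
    (h : ∀ i, 3 ≤ i → i ≤ n → i ≤ 4 * #(A ∩ range i) ∧ i ≤ 4 * #(range i \ A)) :
    BalancedPartition n A := by
  refine ⟨h0, h1, fun i hi3 hin => ?_⟩
  have hsum : (#(range i \ A) : ℝ) + #(A ∩ range i) = i := by
    rw [inter_comm]; exact_mod_cast (card_sdiff_add_card_inter (range i) A).trans (card_range i)
  obtain ⟨hS, hM⟩ := h i hi3 hin
  have hS' : (i : ℝ) ≤ 4 * #(A ∩ range i) := by exact_mod_cast hS
  have hM' : (i : ℝ) ≤ 4 * #(range i \ A) := by exact_mod_cast hM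
  refine ⟨⟨?_, ?_⟩, ?_, ?_⟩ <;> linarith

def sampleOfWalk (B : Finset ℕ) : Finset ℕ := insert 1 (B.map (addRightEmbedding 2))

lemma sampleOfWalk_injective : Function.Injective sampleOfWalk := by
  intro B C h
  have hmap : B.map (addRightEmbedding 2) = C.map (addRightEmbedding 2) := by
    simpa [sampleOfWalk] using congrArg (Finset.erase · 1) h
  exact map_injective _ hmap

lemma sampleOfWalk_subset_range {B : Finset ℕ} {m : ℕ} (hB : B ⊆ range m) :
    sampleOfWalk B ⊆ range (m + 2) := by
  intro x hx
  simp only [sampleOfWalk, mem_insert, mem_map, addRightEmbedding_apply] at hx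
  rcases hx with rfl | ⟨y, hy, rfl⟩
  · simp
  · simpa using mem_range.1 (hB hy)

lemma card_sampleOfWalk_inter_range (B : Finset ℕ) (k : ℕ) :
    #(sampleOfWalk B ∩ range (k + 2)) = #(B ∩ range k) + 1 := by
  have : sampleOfWalk B ∩ range (k + 2)
      = insert 1 ((B ∩ range k).map (addRightEmbedding 2)) := by
    ext x
    simp only [sampleOfWalk, mem_inter, mem_insert, mem_map, mem_range, addRightEmbedding_apply]
    constructor
    · rintro ⟨rfl | ⟨y, hy, rfl⟩, hx⟩
      · exact Or.inl rfl
      · exact Or.inr ⟨y, ⟨hy, by omega⟩, rfl⟩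
    · rintro (rfl | ⟨y, ⟨hy, hyk⟩, rfl⟩)
      · exact ⟨Or.inl rfl, by omega⟩
      · exact ⟨Or.inr ⟨y, hy, rfl⟩, by omega⟩
  rw [this, card_insert_of_notMem (by simp), card_map]

lemma balancedPartition_sampleOfWalk {B : Finset ℕ} {m : ℕ}
    (hS : ¬WalkHits 3 B m) (hM : ¬WalkHits 3 (range m \ B) m) :
    BalancedPartition (m + 2) (sampleOfWalk B) := by
  have h0 : 0 ∉ sampleOfWalk B := by simp [sampleOfWalk]
  refine balancedPartition_of_le_four_mul h0 (mem_insert_self 1 _) fun i hi3 hin => ?_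
  obtain ⟨k, rfl⟩ := Nat.exists_eq_add_of_le' (show 2 ≤ i by omega)
  have hk : k ≤ m := by omega
  have hsum := card_sdiff_range_inter_range_add (B := B) hk
  have hA := card_sampleOfWalk_inter_range B k
  have hcompl := card_sdiff_add_card_inter (range (k + 2)) (sampleOfWalk B)
  rw [inter_comm, hA, card_range] at hcompl
  have hS' : -3 < sampleWalk B k := by
    by_contra! h; exact hS ⟨k, hk, h⟩
  have hM' : -3 < sampleWalk (range m \ B) k := by
    by_contra! h; exact hM ⟨k, hk, h⟩
  simp only [sampleWalk] at hS' hM'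
  omega

lemma card_not_walkHits_le_natCard_balanced (m : ℕ) :
    #{B ∈ (range m).powerset | ¬WalkHits 3 B m ∧ ¬WalkHits 3 (range m \ B) m}
      ≤ Nat.card {A : Finset ℕ // A ⊆ range (m + 2) ∧ BalancedPartition (m + 2) A} := by
  rw [← card_map ⟨sampleOfWalk, sampleOfWalk_injective⟩, ← Set.ncard_coe_finset,
    ← Nat.card_coe_set_eq]
  refine Nat.card_mono ((range (m + 2)).powerset.finite_toSet.subset
    fun A hA => mem_powerset.2 hA.1) ?_
  intro A hA
  simp only [coe_map, Set.mem_image, mem_coe, mem_filter, mem_powerset] at hA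
  obtain ⟨B, ⟨hB, hS, hM⟩, rfl⟩ := hA
  exact ⟨sampleOfWalk_subset_range hB, balancedPartition_sampleOfWalk hS hM⟩

/-- Balanced Sampling Lemma: when each of `n ≥ 2` agents is assigned to the
market or the sample independently with probability `1/2` each (equivalently,
the sample `A` is uniform over subsets of `{0,…,n-1}`), the partition is
balanced with probability at least `0.169`. -/
theorem balanced_sampling (n : ℕ) (hn : 2 ≤ n) :
    (0.169 : ℝ) ≤
      (Nat.card {A : Finset ℕ // A ⊆ Finset.range n ∧ BalancedPartition n A} : ℝ)
        / 2 ^ n := by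
  obtain ⟨m, rfl⟩ := Nat.exists_eq_add_of_le' hn
  set good := {B ∈ (range m).powerset | ¬WalkHits 3 B m ∧ ¬WalkHits 3 (range m \ B) m}
  set hitS := {B ∈ (range m).powerset | WalkHits 3 B m}
  set hitM := {B ∈ (range m).powerset | WalkHits 3 (range m \ B) m}
  have hS : (#hitS : ℝ) ≤ (109 / 200) ^ 3 * 2 ^ m :=
    card_walkHits_le (by norm_num) (by norm_num) 3 m
  have hM : (#hitM : ℝ) ≤ (109 / 200) ^ 3 * 2 ^ m := by
    rwa [card_filter_powerset_sdiff (range m) (WalkHits 3 · m)]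
  have hunion : #(range m).powerset ≤ #good + #hitS + #hitM := by
    refine (card_le_card fun B hB => ?_).trans ((card_union_le _ _).trans
      (Nat.add_le_add_right (card_union_le _ _) _))
    simp only [good, hitS, hitM, mem_union, mem_filter]
    tauto
  rw [card_powerset, card_range] at hunion
  have hunion' : (2 : ℝ) ^ m ≤ #good + #hitS + #hitM := by exact_mod_cast hunion
  have hgood : (#good : ℝ)
      ≤ Nat.card {A : Finset ℕ // A ⊆ range (m + 2) ∧ BalancedPartition (m + 2) A} := by
    exact_mod_cast card_not_walkHits_le_natCard_balanced m
  rw [le_div_iff₀ (by positivity), pow_add]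
  norm_num at hS hM ⊢
  linarith
end

section
/- Let F be a distribution on [0,∞) such that the function v ↦ v(1−F(v))/F(v) is nonincreasing (the 'inscribed triangle property'). Then the expected revenue of the two-agent Vickrey auction with two i.i.d. values from F (i.e., E[min(v₁,v₂)]) is at least the optimal single-agent revenue sup_p p(1−F(p)). -/
/-!
By the layer cake formula, `E[min(v₁,v₂)] = ∫₀^∞ P(v₁ > t)² dt = ∫₀^∞ (1 - F t)² dt`.
Put `a = p(1 - F p)`. For `0 < t ≤ p` the inscribed triangle property (comparing `t` with `p`)
gives `1 - F t ≥ a / (a + F(p) t)`, and `t ↦ a t / (a + F(p) t)` is an antiderivative of the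
square of this bound, so `∫₀^p (1 - F t)² dt ≥ a p / (a + F(p) p) = a`.
-/

open MeasureTheory Set

namespace MeasureTheory

variable {α : Type*} [MeasurableSpace α] {μ : Measure α} {f : α → ℝ}

theorem Integrable.integrableOn_Ioi_measureReal_lt (hf : Integrable f μ) (hf_nn : 0 ≤ᵐ[μ] f) :
    IntegrableOn (fun t ↦ μ.real {a | t < f a}) (Ioi 0) := by
  have hmeas : Measurable fun t ↦ μ.real {a | t < f a} :=
    Measurable.ennreal_toReal (f := fun t ↦ μ {a | t < f a})
      (Antitone.measurable fun _ _ hst ↦ measure_mono fun _ h ↦ hst.trans_lt h)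
  refine ⟨hmeas.aestronglyMeasurable, ?_⟩
  calc ∫⁻ t in Ioi 0, ‖μ.real {a | t < f a}‖ₑ
      ≤ ∫⁻ t in Ioi 0, μ {a | t < f a} := lintegral_mono fun t ↦ by
        rw [Real.enorm_of_nonneg measureReal_nonneg]; exact ENNReal.ofReal_toReal_le
    _ = ∫⁻ a, ENNReal.ofReal (f a) ∂μ :=
      (lintegral_eq_lintegral_meas_lt μ hf_nn hf.aemeasurable).symm
    _ < ⊤ := hf.lintegral_lt_top

theorem ae_nonneg_of_measure_Iic_eq_zero {μ : Measure ℝ} (h : ∀ v < 0, μ (Iic v) = 0) :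
    ∀ᵐ x ∂μ, 0 ≤ x := by
  have hIio : ⋃ n : ℕ, Iic (-(1 / ((n : ℝ) + 1))) = Iio 0 :=
    iUnion_Iic_eq_Iio_of_lt_of_tendsto (fun _ ↦ neg_neg_of_pos (by positivity))
      (by simpa only [neg_zero] using (tendsto_one_div_add_atTop_nhds_zero_nat (𝕜 := ℝ)).neg)
  have : μ (Iio 0) = 0 := by
    rw [← hIio]
    exact measure_iUnion_null fun n ↦ h _ (neg_neg_of_pos (by positivity))
  rw [ae_iff]
  simp only [not_le]
  exact this

theorem ae_min_nonneg {μ : Measure ℝ} (h0 : ∀ᵐ x ∂μ, 0 ≤ x) :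
    0 ≤ᵐ[μ.prod μ] fun z : ℝ × ℝ ↦ min z.1 z.2 := by
  filter_upwards [Measure.quasiMeasurePreserving_fst.ae h0,
    Measure.quasiMeasurePreserving_snd.ae h0] with z h1 h2 using le_min h1 h2

theorem measureReal_prod_lt_min (μ : Measure ℝ) [SFinite μ] (t : ℝ) :
    (μ.prod μ).real {z : ℝ × ℝ | t < min z.1 z.2} = μ.real (Ioi t) ^ 2 := by
  have : {z : ℝ × ℝ | t < min z.1 z.2} = Ioi t ×ˢ Ioi t := by ext; simp
  rw [this, measureReal_prod_prod, sq]

theorem integral_min_eq_integral_measureReal_Ioi_sq {μ : Measure ℝ} [SFinite μ]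
    (h0 : ∀ᵐ x ∂μ, 0 ≤ x) (hint : Integrable (fun z : ℝ × ℝ ↦ min z.1 z.2) (μ.prod μ)) :
    ∫ z, min z.1 z.2 ∂(μ.prod μ) = ∫ t in Ioi 0, μ.real (Ioi t) ^ 2 := by
  simp only [hint.integral_eq_integral_meas_lt (ae_min_nonneg h0), measureReal_prod_lt_min]

theorem integrableOn_Ioi_measureReal_Ioi_sq {μ : Measure ℝ} [SFinite μ]
    (h0 : ∀ᵐ x ∂μ, 0 ≤ x) (hint : Integrable (fun z : ℝ × ℝ ↦ min z.1 z.2) (μ.prod μ)) :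
    IntegrableOn (fun t ↦ μ.real (Ioi t) ^ 2) (Ioi 0) := by
  simpa only [measureReal_prod_lt_min] using
    hint.integrableOn_Ioi_measureReal_lt (ae_min_nonneg h0)

end MeasureTheory

theorem le_integral_sq_of_le_mul {a b p : ℝ} {ψ : ℝ → ℝ} (ha : 0 < a) (hb : 0 ≤ b) (hp : 0 ≤ p)
    (hψ : IntegrableOn (fun t ↦ ψ t ^ 2) (Icc 0 p))
    (hle : ∀ t ∈ Ioo 0 p, a ≤ ψ t * (a + b * t)) :
    a * p / (a + b * p) ≤ ∫ t in 0..p, ψ t ^ 2 := by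
  have hpos (t : ℝ) (ht : 0 ≤ t) : 0 < a + b * t := by positivity
  have hderiv (t : ℝ) (ht : 0 ≤ t) :
      HasDerivAt (fun t ↦ a * t / (a + b * t)) ((a / (a + b * t)) ^ 2) t := by
    refine (((hasDerivAt_id' t).const_mul a).div (((hasDerivAt_id' t).const_mul b).const_add a)
      (hpos t ht).ne').congr_deriv ?_
    field_simp
    ring
  have hbound (t : ℝ) (ht : t ∈ Ioo 0 p) : (a / (a + b * t)) ^ 2 ≤ ψ t ^ 2 := by
    have hden := hpos t ht.1.le
    have : a / (a + b * t) ≤ ψ t := by rw [div_le_iff₀ hden]; exact hle t ht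
    gcongr
  simpa using intervalIntegral.sub_le_integral_of_hasDeriv_right_of_le hp
    (fun t ht ↦ (hderiv t ht.1).continuousAt.continuousWithinAt)
    (fun t ht ↦ (hderiv t ht.1.le).hasDerivWithinAt) hψ hbound

theorem revenue_le_one_sub_mul_of_antitoneOn {F : ℝ → ℝ}
    (hIT : AntitoneOn (fun v ↦ v * (1 - F v) / F v) {v | 0 < v ∧ 0 < F v})
    {t p : ℝ} (ht : 0 < t) (htp : t ≤ p) (hFt : 0 ≤ F t) (hFtp : F t ≤ F p) :
    p * (1 - F p) ≤ (1 - F t) * (p * (1 - F p) + F p * t) := by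
  rcases hFt.eq_or_lt with hFt0 | hFt_pos
  · rw [← hFt0] at hFtp ⊢
    nlinarith
  · have hFp := hFt_pos.trans_le hFtp
    have h := hIT ⟨ht, hFt_pos⟩ ⟨ht.trans_le htp, hFp⟩ htp
    rw [div_le_div_iff₀ hFp hFt_pos] at h
    nlinarith

/-- If the distribution `F` on `[0,∞)` satisfies the inscribed triangle
property — `v ↦ v(1-F(v))/F(v)` is nonincreasing — then the expected revenue
of the two-agent Vickrey auction with two i.i.d. values from `F`, namely
`E[min(v₁,v₂)]`, is at least the optimal single-agent revenue
`sup_p p(1-F(p))`. -/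
theorem vickrey_beats_monopoly_of_inscribed_triangle
    (μ : Measure ℝ) [IsProbabilityMeasure μ] (F : ℝ → ℝ)
    (hcdf : ∀ v, (μ (Iic v)).toReal = F v)
    (hsupp : ∀ v < (0:ℝ), F v = 0)
    (hIT : AntitoneOn (fun v => v * (1 - F v) / F v) {v | 0 < v ∧ 0 < F v})
    (hint : Integrable (fun p : ℝ × ℝ => min p.1 p.2) (μ.prod μ)) :
    ∀ p : ℝ, p * (1 - F p) ≤ ∫ w, min w.1 w.2 ∂(μ.prod μ) := by
  intro p
  have hF : Monotone F := fun u v huv ↦ by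
    rw [← hcdf, ← hcdf]; exact measureReal_mono (Iic_subset_Iic.2 huv)
  have htail (t : ℝ) : μ.real (Ioi t) = 1 - F t := by
    rw [← compl_Iic, probReal_compl_eq_one_sub measurableSet_Iic, measureReal_def, hcdf]
  have h0 : ∀ᵐ x ∂μ, 0 ≤ x := ae_nonneg_of_measure_Iic_eq_zero fun v hv ↦
    (measureReal_eq_zero_iff).1 ((measureReal_def μ _).trans ((hcdf v).trans (hsupp v hv)))
  rw [integral_min_eq_integral_measureReal_Ioi_sq h0 hint]
  have hInt := integrableOn_Ioi_measureReal_Ioi_sq h0 hint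
  rcases le_or_gt (p * (1 - F p)) 0 with hle | ha
  · exact hle.trans (setIntegral_nonneg measurableSet_Ioi fun t _ ↦ sq_nonneg _)
  have hp : 0 < p := by
    by_contra! hp
    rcases hp.lt_or_eq with hp | rfl
    · rw [hsupp p hp] at ha; linarith
    · simp at ha
  have hFp : 0 ≤ F p := hcdf p ▸ ENNReal.toReal_nonneg
  calc p * (1 - F p) = p * (1 - F p) * p / (p * (1 - F p) + F p * p) := by field_simp; ring
    _ ≤ ∫ t in 0..p, μ.real (Ioi t) ^ 2 :=
      le_integral_sq_of_le_mul ha hFp hp.le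
        ((integrableOn_Icc_iff_integrableOn_Ioc).2 (hInt.mono_set Ioc_subset_Ioi_self))
        fun t ht ↦ htail t ▸ revenue_le_one_sub_mul_of_antitoneOn hIT ht.1 ht.2.le
          (hcdf t ▸ ENNReal.toReal_nonneg) (hF ht.2.le)
    _ ≤ ∫ t in Ioi 0, μ.real (Ioi t) ^ 2 := by
      rw [intervalIntegral.integral_of_le hp.le]
      exact setIntegral_mono_set hInt (ae_of_all _ fun t ↦ sq_nonneg _)
        Ioc_subset_Ioi_self.eventuallyLE
end

section
/- Every regular distribution satisfies the inscribed triangle property: if F is a continuous distribution with density f and the virtual value v − (1−F(v))/f(v) is nondecreasing (equivalently, the revenue curve q ↦ F⁻¹(1−q)·q is concave), then v(1−F(v))/F(v) is nonincreasing in v. -/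
open Set intervalIntegral

/-- Every regular distribution satisfies the inscribed triangle property: if
`F` is a continuous distribution with density `f` on support `[a,b] ⊆ [0,∞)`
whose virtual value `v - (1-F(v))/f(v)` is nondecreasing (Myerson
regularity), then `v(1-F(v))/F(v)` is nonincreasing on the support. -/
theorem regular_implies_inscribed_triangle
    (a b : ℝ) (ha : 0 ≤ a) (hab : a < b) (F f : ℝ → ℝ)
    (hF : ∀ z ∈ Icc a b, F z = ∫ t in a..z, f t)
    (hFa : F a = 0) (hFb : F b = 1)
    (hfpos : ∀ z ∈ Icc a b, 0 < f z)
    (hfcont : ContinuousOn f (Icc a b))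
    (hreg : MonotoneOn (fun v => v - (1 - F v) / f v) (Icc a b)) :
    AntitoneOn (fun v => v * (1 - F v) / F v) {v | v ∈ Icc a b ∧ 0 < F v} := by
  have hab' : a ≤ b := hab.le
  -- interval integrability of f on subintervals of [a,b]
  have hfint : ∀ x ∈ Icc a b, ∀ y ∈ Icc a b, IntervalIntegrable f MeasureTheory.volume x y := by
    intro x hx y hy
    apply ContinuousOn.intervalIntegrable
    exact hfcont.mono (uIcc_subset_Icc hx hy)
  -- F is continuous on [a,b]
  have hFcont : ContinuousOn F (Icc a b) := by
    have h1 : ContinuousOn (fun x => ∫ t in a..x, f t) (Icc a b) := by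
      have := intervalIntegral.continuousOn_primitive_interval
        (μ := MeasureTheory.volume) (f := f) (a := a) (b := b) ?_
      · simpa [uIcc_of_le hab'] using this
      · rw [uIcc_of_le hab']
        exact hfcont.integrableOn_compact isCompact_Icc
    exact h1.congr (fun z hz => hF z hz)
  -- F is monotone on [a,b]
  have hFmono : MonotoneOn F (Icc a b) := by
    intro x hx y hy hxy
    have hsub : F y - F x = ∫ t in x..y, f t := by
      rw [hF x hx, hF y hy]
      exact intervalIntegral.integral_interval_sub_left (hfint a ⟨le_refl a, hab'⟩ y hy)
        (hfint a ⟨le_refl a, hab'⟩ x hx)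
    have hnn : 0 ≤ ∫ t in x..y, f t := by
      apply intervalIntegral.integral_nonneg hxy
      intro u hu
      exact (hfpos u ⟨hx.1.trans hu.1, hu.2.trans hy.2⟩).le
    linarith [hsub ▸ hnn]
  -- F has derivative f at interior points
  have hFderiv : ∀ x ∈ Ioo a b, HasDerivAt F (f x) x := by
    intro x hx
    have hx' : x ∈ Icc a b := Ioo_subset_Icc_self hx
    have hmem : Icc a b ∈ nhds x := Icc_mem_nhds hx.1 hx.2
    have hca : ContinuousAt f x := hfcont.continuousAt hmem
    have hmeas : StronglyMeasurableAtFilter f (nhds x) MeasureTheory.volume :=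
      ⟨Icc a b, hmem, hfcont.aestronglyMeasurable measurableSet_Icc⟩
    have h1 : HasDerivAt (fun u => ∫ t in a..u, f t) (f x) x :=
      intervalIntegral.integral_hasDerivAt_right (hfint a ⟨le_refl a, hab'⟩ x hx') hmeas hca
    apply h1.congr_of_eventuallyEq
    exact Filter.eventuallyEq_of_mem hmem (fun z hz => hF z hz)
  -- the key pointwise inequality: F v (1 - F v) ≤ v f v
  have key : ∀ v ∈ Icc a b, F v * (1 - F v) ≤ v * f v := by
    intro v hv
    have hfv := hfpos v hv
    set K : ℝ := v - (1 - F v) / f v with hK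
    -- pointwise comparison on [a, v]
    have step : ∀ t ∈ Icc a v, -(K * f t) ≤ 1 - F t - t * f t := by
      intro t ht
      have ht' : t ∈ Icc a b := ⟨ht.1, ht.2.trans hv.2⟩
      have hle : t - (1 - F t) / f t ≤ K := hreg ht' hv ht.2
      have hft := hfpos t ht'
      have h2 := mul_le_mul_of_nonneg_right hle hft.le
      rw [sub_mul, div_mul_cancel₀ _ hft.ne'] at h2
      nlinarith
    have hcontg : ContinuousOn (fun t => 1 - F t - t * f t) (Icc a b) :=
      (continuousOn_const.sub hFcont).sub (continuousOn_id.mul hfcont)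
    have hvset : uIcc a v ⊆ Icc a b := uIcc_subset_Icc ⟨le_refl a, hab'⟩ hv
    have hint1 : IntervalIntegrable (fun t => 1 - F t - t * f t) MeasureTheory.volume a v :=
      (hcontg.mono hvset).intervalIntegrable
    have hint2 : IntervalIntegrable (fun t => -(K * f t)) MeasureTheory.volume a v :=
      (((continuousOn_const.mul hfcont).neg).mono hvset).intervalIntegrable
    have hmono := intervalIntegral.integral_mono_on hv.1 hint2 hint1 step
    -- compute LHS integral
    have hlhs : (∫ t in a..v, -(K * f t)) = -(K * F v) := by
      rw [intervalIntegral.integral_neg, intervalIntegral.integral_const_mul, hF v hv]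
    -- FTC for the RHS integral
    have hrhs : (∫ t in a..v, (1 - F t - t * f t)) = v * (1 - F v) - a * (1 - F a) := by
      apply intervalIntegral.integral_eq_sub_of_hasDeriv_right_of_le hv.1
      · exact (continuousOn_id.mul (continuousOn_const.sub hFcont)).mono
          (Icc_subset_Icc (le_refl a) hv.2)
      · intro x hx
        have hx' : x ∈ Ioo a b := ⟨hx.1, hx.2.trans_le hv.2⟩
        have h3 : HasDerivAt (fun t => t * (1 - F t)) (1 * (1 - F x) + x * (0 - f x)) x :=
          (hasDerivAt_id x).mul ((hasDerivAt_const x (1 : ℝ)).sub (hFderiv x hx'))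
        have h4 : HasDerivAt (fun t => t * (1 - F t)) (1 - F x - x * f x) x := by
          convert h3 using 1; ring
        exact h4.hasDerivWithinAt
      · exact hint1
    rw [hlhs, hrhs, hFa] at hmono
    -- hmono : -(K * F v) ≤ v * (1 - F v) - a * (1 - 0)
    have hKf : K * f v = v * f v - (1 - F v) := by
      rw [hK, sub_mul, div_mul_cancel₀ _ hfv.ne']
    have hFv0 : 0 ≤ F v := by
      have := hFmono ⟨le_refl a, hab'⟩ hv hv.1
      rw [hFa] at this; exact this
    nlinarith [mul_le_mul_of_nonneg_right hmono hfv.le]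
  -- now prove antitonicity via the derivative
  set S : Set ℝ := {v | v ∈ Icc a b ∧ 0 < F v} with hS
  have hSsub : S ⊆ Icc a b := fun x hx => hx.1
  have hconv : Convex ℝ S := by
    rw [convex_iff_ordConnected]
    constructor
    intro x hx y hy z hz
    have hz' : z ∈ Icc a b := ⟨hx.1.1.trans hz.1, hz.2.trans hy.1.2⟩
    exact ⟨hz', lt_of_lt_of_le hx.2 (hFmono hx.1 hz' hz.1)⟩
  have hGcont : ContinuousOn (fun v => v * (1 - F v) / F v) S := by
    apply ContinuousOn.div
    · exact (continuousOn_id.mul (continuousOn_const.sub (hFcont.mono hSsub)))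
    · exact hFcont.mono hSsub
    · intro x hx; exact hx.2.ne'
  have hint_sub : interior S ⊆ Ioo a b := by
    have := interior_mono hSsub
    rwa [interior_Icc] at this
  have hGderiv : ∀ x ∈ interior S,
      HasDerivAt (fun v => v * (1 - F v) / F v)
        (((1 * (1 - F x) + x * (0 - f x)) * F x - x * (1 - F x) * f x) / (F x) ^ 2) x := by
    intro x hx
    have hxS : x ∈ S := interior_subset hx
    have hx' : x ∈ Ioo a b := hint_sub hx
    exact ((hasDerivAt_id x).mul ((hasDerivAt_const x (1 : ℝ)).sub (hFderiv x hx'))).div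
      (hFderiv x hx') hxS.2.ne'
  apply antitoneOn_of_deriv_nonpos hconv hGcont
  · intro x hx
    exact (hGderiv x hx).differentiableAt.differentiableWithinAt
  · intro x hx
    have hxS : x ∈ S := interior_subset hx
    have hx' : x ∈ Ioo a b := hint_sub hx
    rw [(hGderiv x hx).deriv]
    apply div_nonpos_of_nonpos_of_nonneg _ (sq_nonneg _)
    have hk := key x hxS.1
    nlinarith [hxS.2, (hfpos x hxS.1)]
end

section
/- For the monopoly pricing problem, mixing the Vickrey auction with probability 1/3 and the zero-price lottery with probability 2/3 in a two-agent single-item setting yields expected residual surplus (1/3)(v₁ − v₂) + (2/3)((v₁+v₂)/2) = (2/3)v₁ for v₁ ≥ v₂ ≥ 0, which is at least (2/3)·max{(v₁+v₂)/2, v₁ − v₂/2}; hence this mixture is a 3/2-approximation of the benchmark on every profile. -/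
lemma vickrey_third_add_lottery_two_thirds (v₁ v₂ : ℝ) :
    (1 / 3) * (v₁ - v₂) + (2 / 3) * ((v₁ + v₂) / 2) = (2 / 3) * v₁ := by
  ring

lemma max_avg_sub_half_le_of_le {v₁ v₂ : ℝ} (h12 : v₂ ≤ v₁) (h2 : 0 ≤ v₂) :
    max ((v₁ + v₂) / 2) (v₁ - v₂ / 2) ≤ v₁ :=
  max_le (by linarith) (by linarith)

/-- Mixing the Vickrey auction with probability `1/3` and the zero-price
lottery with probability `2/3` in a two-agent single-item setting yields
expected residual surplus `(1/3)(v₁-v₂) + (2/3)((v₁+v₂)/2) = (2/3)v₁` for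
`v₁ ≥ v₂ ≥ 0`, which is at least `(2/3)·max{(v₁+v₂)/2, v₁ - v₂/2}`; hence the
mixture is a `3/2`-approximation of the benchmark on every profile. -/
theorem vickrey_lottery_mixture (v₁ v₂ : ℝ) (h12 : v₂ ≤ v₁) (h2 : 0 ≤ v₂) :
    (1 / 3) * (v₁ - v₂) + (2 / 3) * ((v₁ + v₂) / 2) = (2 / 3) * v₁ ∧
      (2 / 3) * max ((v₁ + v₂) / 2) (v₁ - v₂ / 2) ≤ (2 / 3) * v₁ ∧
      max ((v₁ + v₂) / 2) (v₁ - v₂ / 2) / (3 / 2) ≤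
        (1 / 3) * (v₁ - v₂) + (2 / 3) * ((v₁ + v₂) / 2) := by
  have hB := max_avg_sub_half_le_of_le h12 h2
  have hscaled : (2 / 3) * max ((v₁ + v₂) / 2) (v₁ - v₂ / 2) ≤ (2 / 3) * v₁ := by
    gcongr
  refine ⟨vickrey_third_add_lottery_two_thirds v₁ v₂, hscaled, ?_⟩
  rw [vickrey_third_add_lottery_two_thirds]
  linarith
end

section
/- The ratio auction with ratio α = 3 and bias β = 4/5 (allocating by fair coin when values are within factor 3 of each other, and with probability 4/5 to the higher agent otherwise, with corresponding weighted-Vickrey payments) achieves expected residual surplus exactly (4/5)·max{(v₁+v₂)/2, v₁ − v₂, v₂ − v₁} on every two-agent profile; equivalently it is a 5/4-approximation of the restricted benchmark max{(v₁+v₂)/2, v₁ − v₂} (for v₁ ≥ v₂). -/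
/-- The ratio auction with ratio `α = 3` and bias `β = 4/5`, realized as the
mixture of weighted Vickrey auctions with `w₁ = 1` and `w₂` drawn from
`{0, 1/3, 3, ∞}` with probabilities `1/5, 3/10, 3/10, 1/5`: its expected
residual surplus on any profile `(v₁, v₂)` with `v₁, v₂ ≥ 0` is exactly
`(4/5)·max{(v₁+v₂)/2, v₁ - v₂, v₂ - v₁}`; equivalently (for `v₁ ≥ v₂`) it is
a `5/4`-approximation of the restricted benchmark
`max{(v₁+v₂)/2, v₁ - v₂}`. -/
theorem ratio_auction_alpha_three (v₁ v₂ : ℝ) (h1 : 0 ≤ v₁) (h2 : 0 ≤ v₂) :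
    (1 / 5) * v₁ + (1 / 5) * v₂
        + (3 / 10) * (if v₂ / 3 ≤ v₁ then v₁ - v₂ / 3 else v₂ - 3 * v₁)
        + (3 / 10) * (if 3 * v₂ < v₁ then v₁ - 3 * v₂ else v₂ - v₁ / 3) =
      (4 / 5) * max ((v₁ + v₂) / 2) (max (v₁ - v₂) (v₂ - v₁)) ∧
      (v₂ ≤ v₁ →
        max ((v₁ + v₂) / 2) (v₁ - v₂) / (5 / 4) ≤
          (1 / 5) * v₁ + (1 / 5) * v₂
            + (3 / 10) * (if v₂ / 3 ≤ v₁ then v₁ - v₂ / 3 else v₂ - 3 * v₁)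
            + (3 / 10) * (if 3 * v₂ < v₁ then v₁ - 3 * v₂ else v₂ - v₁ / 3)) := by
  have key : (1 / 5) * v₁ + (1 / 5) * v₂
        + (3 / 10) * (if v₂ / 3 ≤ v₁ then v₁ - v₂ / 3 else v₂ - 3 * v₁)
        + (3 / 10) * (if 3 * v₂ < v₁ then v₁ - 3 * v₂ else v₂ - v₁ / 3) =
      (4 / 5) * max ((v₁ + v₂) / 2) (max (v₁ - v₂) (v₂ - v₁)) := by
    rcases max_cases ((v₁ + v₂) / 2) (max (v₁ - v₂) (v₂ - v₁)) with ⟨e1, l1⟩ | ⟨e1, l1⟩ <;>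
      rcases max_cases (v₁ - v₂) (v₂ - v₁) with ⟨e2, l2⟩ | ⟨e2, l2⟩ <;>
      rw [e1] <;> try rw [e2]
    all_goals split_ifs <;> (try rw [e2] at l1) <;> linarith
  refine ⟨key, fun hle => ?_⟩
  rw [key]
  have : max ((v₁ + v₂) / 2) (v₁ - v₂) = max ((v₁ + v₂) / 2) (max (v₁ - v₂) (v₂ - v₁)) := by
    rcases max_cases (v₁ - v₂) (v₂ - v₁) with ⟨e2, l2⟩ | ⟨e2, l2⟩
    · rw [e2]
    · rw [e2]
      have : v₁ = v₂ := by linarith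
      simp [this]
  rw [this]; ring_nf; linarith
end
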